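/- arXiv:1709.02065 — 3 statements merged into one kernel-verified Lean document; each statement's English description precedes it below -/
import Mathlib

section
/- Let R be a commutative ring and I an ideal with J(R) ⊆ I. If the quotient I/J(R) is Boolean (every element is idempotent in R/J(R)) and J(R) is nil, then I is a nil clean ideal of R. -/
def IsNilCleanIdeal {R : Type*} [CommRing R] (I : Ideal R) : Prop :=
  ∀ x ∈ I, ∃ e n : R, IsIdempotentElem e ∧ IsNilpotent n ∧ x = e + n

/-- If `J(R) ⊆ I`, `I/J(R)` is Boolean and `J(R)` is nil, then `I` is a nil clean ideal. -/
theorem nilCleanIdeal_of_boolean_of_jacobson_nil {R : Type*} [CommRing R] (I : Ideal R)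
    (hle : (⊥ : Ideal R).jacobson ≤ I)
    (hbool : ∀ a ∈ I, a - a ^ 2 ∈ (⊥ : Ideal R).jacobson)
    (hnil : ∀ x ∈ (⊥ : Ideal R).jacobson, IsNilpotent x) :
    IsNilCleanIdeal I := by
  intro x hx
  obtain ⟨m, hm⟩ := hnil _ (hbool x hx)
  set k := m + 1 with hk
  have hk0 : (x - x ^ 2) ^ k = 0 := by rw [hk, pow_succ, hm, zero_mul]
  set e := 1 - (1 - x ^ k) ^ k with he
  have hidem : IsIdempotentElem e := isIdempotentElem_one_sub_one_sub_pow_pow x k hk0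
  refine ⟨e, x - e, hidem, ?_, by ring⟩
  rw [← mem_nilradical, ← Ideal.Quotient.eq_zero_iff_mem, map_sub, sub_eq_zero]
  set f := Ideal.Quotient.mk (nilradical R)
  have hxq : IsIdempotentElem (f x) := by
    have : f (x - x ^ 2) = 0 := by
      rw [Ideal.Quotient.eq_zero_iff_mem, mem_nilradical]
      exact ⟨m, hm⟩
    rw [map_sub] at this
    have := sub_eq_zero.mp this
    unfold IsIdempotentElem
    rw [← map_mul, ← sq, ← this]
  have h1x : IsIdempotentElem (1 - f x) := hxq.one_sub
  calc f x = 1 - (1 - f x) := by ring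
    _ = 1 - (1 - (f x) ^ k) ^ k := by
        rw [hk, hxq.pow_succ_eq, h1x.pow_succ_eq]
    _ = f e := by simp [he, f]
end

section
/- Let R be a commutative ring and I an ideal with J(R) ⊆ I. If I is a nil clean ideal of R, then J(R) is nil and for every a ∈ I, a - a^2 ∈ J(R) (i.e., I/J(R) is Boolean). -/
section NilClean

variable {R : Type*} [CommRing R] {e n : R}

theorem IsNilpotent.mem_jacobson_bot (hn : IsNilpotent n) : n ∈ (⊥ : Ideal R).jacobson :=
  Ideal.radical_le_jacobson (mem_nilradical.mpr hn)

theorem IsIdempotentElem.eq_zero_of_mem_jacobson_bot (he : IsIdempotentElem e)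
    (hJ : e ∈ (⊥ : Ideal R).jacobson) : e = 0 := by
  have hunit : IsUnit (1 - e) :=
    Ideal.isUnit_of_sub_one_mem_jacobson_bot _ (by simpa using neg_mem hJ)
  exact hunit.mul_left_eq_zero.mp he.mul_one_sub_self

theorem IsIdempotentElem.isNilpotent_add_of_mem_jacobson_bot (he : IsIdempotentElem e)
    (hn : IsNilpotent n) (hJ : e + n ∈ (⊥ : Ideal R).jacobson) : IsNilpotent (e + n) := by
  have he_mem : e ∈ (⊥ : Ideal R).jacobson := by
    simpa using sub_mem hJ hn.mem_jacobson_bot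
  rwa [he.eq_zero_of_mem_jacobson_bot he_mem, zero_add]

theorem IsIdempotentElem.add_sub_sq_mem_jacobson_bot (he : IsIdempotentElem e)
    (hn : IsNilpotent n) : (e + n) - (e + n) ^ 2 ∈ (⊥ : Ideal R).jacobson := by
  have hfactor : (e + n) - (e + n) ^ 2 = n * (1 - 2 * e - n) := by
    linear_combination (-1 : R) * he.eq
  rw [hfactor]
  exact Ideal.mul_mem_right _ _ hn.mem_jacobson_bot

end NilClean

/-- If `J(R) ⊆ I` and `I` is a nil clean ideal, then `J(R)` is nil and `I/J(R)` is Boolean. -/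
theorem jacobson_nil_and_boolean_of_nilCleanIdeal {R : Type*} [CommRing R] (I : Ideal R)
    (hle : (⊥ : Ideal R).jacobson ≤ I) (h : IsNilCleanIdeal I) :
    (∀ x ∈ (⊥ : Ideal R).jacobson, IsNilpotent x) ∧
      ∀ a ∈ I, a - a ^ 2 ∈ (⊥ : Ideal R).jacobson := by
  constructor
  · intro x hx
    obtain ⟨e, n, he, hn, rfl⟩ := h x (hle hx)
    exact he.isNilpotent_add_of_mem_jacobson_bot hn hx
  · intro a ha
    obtain ⟨e, n, he, hn, rfl⟩ := h a ha
    exact he.add_sub_sq_mem_jacobson_bot hn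
end

section
/- Let R be a commutative ring, M an R-module, N a submodule of M, and I an ideal of R. Then I is a nil clean ideal of R if and only if I(N) = {(r, n) : r ∈ I, n ∈ N} is a nil clean ideal of the idealization R(M). -/
def IsNilClean {A : Type*} [Semiring A] (x : A) : Prop :=
  ∃ e n : A, IsIdempotentElem e ∧ IsNilpotent n ∧ x = e + n

theorem IsNilClean.map {A B F : Type*} [Semiring A] [Semiring B] [FunLike F A B]
    [RingHomClass F A B] {x : A} (hx : IsNilClean x) (f : F) : IsNilClean (f x) := by
  obtain ⟨e, n, he, hn, rfl⟩ := hx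
  exact ⟨f e, f n, he.map f, hn.map f, map_add f e n⟩

namespace TrivSqZeroExt

variable {R M : Type*} [Semiring R] [AddCommMonoid M] [Module R M] [Module Rᵐᵒᵖ M]
  [SMulCommClass R Rᵐᵒᵖ M]

/-- The nilpotent part absorbs the `M`-component, since nilpotency is detected on `fst`. -/
theorem isNilClean_iff_isNilClean_fst {x : TrivSqZeroExt R M} :
    IsNilClean x ↔ IsNilClean x.fst := by
  refine ⟨fun hx => hx.map (fstHom ℕ R M), ?_⟩
  rintro ⟨e, n, he, hn, hx⟩
  refine ⟨inl e, inl n + inr x.snd, he.map (inlHom R M), ?_, ?_⟩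
  · simpa [isNilpotent_iff_isNilpotent_fst] using hn
  · ext <;> simp [hx]

end TrivSqZeroExt

/-- `I` is a nil clean ideal of `R` iff the ideal `I(N) = {(r, n) : r ∈ I, n ∈ N}` is a nil
clean ideal of the idealization `R(M)`. -/
theorem nilCleanIdeal_iff_idealization {R M : Type*} [CommRing R] [AddCommGroup M]
    [Module R M] [Module Rᵐᵒᵖ M] [IsCentralScalar R M] (I : Ideal R) (N : Submodule R M) :
    IsNilCleanIdeal I ↔
      ∀ x : TrivSqZeroExt R M, x.fst ∈ I → x.snd ∈ N →
        ∃ e n : TrivSqZeroExt R M, IsIdempotentElem e ∧ IsNilpotent n ∧ x = e + n := by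
  constructor
  · intro h x hx _
    exact TrivSqZeroExt.isNilClean_iff_isNilClean_fst.mpr (h x.fst hx)
  · intro h r hr
    exact TrivSqZeroExt.isNilClean_iff_isNilClean_fst.mp (h (.inl r) hr N.zero_mem)
end
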